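/- Every finite simple graph of minimum degree at least 4 which has a connected asymmetric spanning subgraph of minimum degree at least 4 admits a majority distinguishing edge coloring with 6 colors; that is, M'_D(G) ≤ 6 for every such graph G. -/

import Mathlib

/-!
The edges of a finite graph split into two classes whose degrees differ by at most `2` at every
vertex. Take a maximal path: if its end is a leaf, remove the path; otherwise an edge at its end
closes a cycle with the path, and remove the cycle. Coloured alternately, the removed walk is
balanced except at its ends, and either it is closed or one end is a leaf; so a split of the
remaining edges (by induction) extends to it after orienting its colours against the imbalance at
the other end.

Splitting the edges of `H` twice gives four classes with at most `⌊(d + 6) / 4⌋ ≤ d / 2` edges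
at a vertex of `H`-degree `d ≥ 4`; splitting the edges of `G \ H` once gives two more classes with
at most `d' / 2 + 1 ≤ deg_G / 2` edges at a vertex of `(G \ H)`-degree `d'`. No colour is used
both on and off `H`, so a colour-preserving automorphism of `G` is an automorphism of `H`, hence
trivial.
-/

open SimpleGraph

/-- Majority edge coloring. -/
def IsMajorityEdgeColoring {V : Type*} [Fintype V] [DecidableEq V]
    (G : SimpleGraph V) [DecidableRel G.Adj] {k : ℕ} (c : Sym2 V → Fin k) : Prop :=
  ∀ u : V, ∀ α : Fin k,
    2 * ((G.neighborFinset u).filter (fun v => c s(u, v) = α)).card ≤ G.degree u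

/-- Distinguishing edge coloring. -/
def IsDistinguishingEdgeColoring {V : Type*} (G : SimpleGraph V) {k : ℕ}
    (c : Sym2 V → Fin k) : Prop :=
  ∀ φ : G ≃g G, (∀ u v : V, G.Adj u v → c s(φ u, φ v) = c s(u, v)) → ∀ x : V, φ x = x


open Finset

section Walk

variable {V : Type*}

def walkEdges : List V → Multiset (Sym2 V)
  | a :: b :: t => s(a, b) ::ₘ walkEdges (b :: t)
  | _ => 0

def alternatingSplit : List V → Multiset (Sym2 V) × Multiset (Sym2 V)
  | a :: b :: t => (s(a, b) ::ₘ (alternatingSplit (b :: t)).2, (alternatingSplit (b :: t)).1)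
  | _ => (0, 0)

lemma alternatingSplit_fst_add_snd : ∀ l : List V,
    (alternatingSplit l).1 + (alternatingSplit l).2 = walkEdges l
  | a :: b :: t => by
    rw [alternatingSplit, walkEdges, ← alternatingSplit_fst_add_snd (b :: t),
      Multiset.cons_add, add_comm]
  | [] | [_] => rfl

lemma walkEdges_le_append : ∀ l₁ l₂ : List V, walkEdges l₁ ≤ walkEdges (l₁ ++ l₂)
  | _ :: b :: t, l₂ => Multiset.cons_le_cons _ (walkEdges_le_append (b :: t) l₂)
  | [], _ | [_], _ => Multiset.zero_le _

lemma exists_maximal_path [Fintype V] {E : Multiset (Sym2 V)} {e : Sym2 V} (he : e ∈ E)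
    (hloop : ¬ e.IsDiag) :
    ∃ w u t, (w :: u :: t).Nodup ∧ walkEdges (w :: u :: t) ≤ E ∧
      ∀ y ∉ w :: u :: t, ¬ s(y, w) ::ₘ walkEdges (w :: u :: t) ≤ E := by
  let paths : Set (List V) := {p | p.Nodup ∧ 2 ≤ p.length ∧ walkEdges p ≤ E}
  have hpaths : paths.Nonempty := by
    induction e using Sym2.ind with
    | _ x y => exact ⟨[x, y], by simpa using hloop, le_rfl, by simpa [walkEdges] using he⟩
  obtain ⟨p, ⟨hnd, hlen, hle⟩, hmax⟩ :=
    (measure fun p : List V => Fintype.card V - p.length).wf.has_min paths hpaths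
  rcases p with _ | ⟨w, _ | ⟨u, t⟩⟩
  · simp at hlen
  · simp at hlen
  refine ⟨w, u, t, hnd, hle, fun y hy hext => hmax (y :: w :: u :: t)
    ⟨List.nodup_cons.mpr ⟨hy, hnd⟩, by simp, hext⟩ ?_⟩
  have := (List.nodup_cons.mpr ⟨hy, hnd⟩).length_le_card
  change Fintype.card V - (y :: w :: u :: t).length < Fintype.card V - (w :: u :: t).length
  simp only [List.length_cons] at this ⊢
  omega

end Walk

section Split

variable {V : Type*} [DecidableEq V]

def edgeDegree (E : Multiset (Sym2 V)) (v : V) : ℕ := E.countP (v ∈ ·)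

@[simp] lemma edgeDegree_zero (v : V) : edgeDegree (0 : Multiset (Sym2 V)) v = 0 := rfl

@[simp] lemma edgeDegree_add (A B : Multiset (Sym2 V)) (v : V) :
    edgeDegree (A + B) v = edgeDegree A v + edgeDegree B v :=
  Multiset.countP_add _ _ _

@[simp] lemma edgeDegree_cons (e : Sym2 V) (E : Multiset (Sym2 V)) (v : V) :
    edgeDegree (e ::ₘ E) v = edgeDegree E v + if v ∈ e then 1 else 0 :=
  Multiset.countP_cons _ _ _

lemma edgeDegree_sub {F E : Multiset (Sym2 V)} (h : F ≤ E) (v : V) :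
    edgeDegree (E - F) v = edgeDegree E v - edgeDegree F v := by
  have := edgeDegree_add (E - F) F v
  rw [tsub_add_cancel_of_le h] at this
  omega

lemma cons_le_of_mem_tsub {e : Sym2 V} {E F : Multiset (Sym2 V)} (hF : F ≤ E) (he : e ∈ E - F) :
    e ::ₘ F ≤ E := by
  rw [← Multiset.singleton_add, add_comm, ← add_tsub_cancel_of_le hF]
  exact add_le_add_right (Multiset.singleton_le.mpr he) F

lemma edgeDegree_walkEdges_of_notMem {v : V} :
    ∀ {l : List V}, v ∉ l → edgeDegree (walkEdges l) v = 0
  | a :: b :: t, h => by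
    simp only [List.mem_cons, not_or] at h
    have htail := edgeDegree_walkEdges_of_notMem (v := v) (l := b :: t) (by simp [h.2.1, h.2.2])
    simp [walkEdges, htail, h.1, h.2.1]
  | [], _ | [_], _ => rfl

lemma edgeDegree_walkEdges_head {a b : V} {t : List V} (h : (a :: b :: t).Nodup) :
    edgeDegree (walkEdges (a :: b :: t)) a = 1 := by
  rw [walkEdges, edgeDegree_cons, edgeDegree_walkEdges_of_notMem (List.nodup_cons.mp h).1]
  simp

lemma imbalance_alternatingSplit : ∀ {a : V} {t : List V}, (a :: t).IsChain (· ≠ ·) →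
    ∃ ε : ℤ, (ε = 1 ∨ ε = -1) ∧ ∀ v,
      (edgeDegree (alternatingSplit (a :: t)).1 v : ℤ) -
          edgeDegree (alternatingSplit (a :: t)).2 v =
        (if v = a then 1 else 0) +
          ε * if v = (a :: t).getLast (List.cons_ne_nil a t) then 1 else 0
  | a, [], _ => ⟨-1, Or.inr rfl, fun v => by
      rw [List.getLast_singleton]
      split_ifs <;> simp [alternatingSplit]⟩
  | a, b :: t, h => by
    rw [List.isChain_cons_cons] at h
    obtain ⟨ε, hε, hv⟩ := imbalance_alternatingSplit h.2
    refine ⟨-ε, by omega, fun v => ?_⟩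
    have hab : ((if v ∈ s(a, b) then 1 else 0 : ℕ) : ℤ) =
        (if v = a then 1 else 0) + if v = b then 1 else 0 := by
      by_cases hva : v = a <;> simp [hva, h.1]
    rw [alternatingSplit, edgeDegree_cons, Nat.cast_add, hab, List.getLast_cons_cons]
    linear_combination -hv v

def IsNearlyBalanced (A B : Multiset (Sym2 V)) : Prop :=
  ∀ v, edgeDegree A v ≤ edgeDegree B v + 2 ∧ edgeDegree B v ≤ edgeDegree A v + 2

lemma IsNearlyBalanced.symm {A B : Multiset (Sym2 V)} (h : IsNearlyBalanced A B) :
    IsNearlyBalanced B A :=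
  fun v => (h v).symm

lemma IsNearlyBalanced.add {A B C D : Multiset (Sym2 V)} (hAB : IsNearlyBalanced A B)
    (hCD : IsNearlyBalanced C D) {z : V}
    (hz : ∀ v ≠ z, edgeDegree C v = edgeDegree D v ∨ edgeDegree A v = edgeDegree B v)
    (hopp : edgeDegree A z ≤ edgeDegree B z ∧ edgeDegree D z ≤ edgeDegree C z ∨
      edgeDegree B z ≤ edgeDegree A z ∧ edgeDegree C z ≤ edgeDegree D z) :
    IsNearlyBalanced (A + C) (B + D) := by
  intro v
  have := hAB v
  have := hCD v
  simp only [edgeDegree_add]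
  rcases eq_or_ne v z with rfl | hv
  · omega
  · rcases hz v hv with h | h <;> omega

/-- Swapping `C` and `D` if necessary, the imbalances at `z` have opposite signs. -/
lemma IsNearlyBalanced.add_or_add {A B C D : Multiset (Sym2 V)} (hAB : IsNearlyBalanced A B)
    (hCD : IsNearlyBalanced C D) {z : V}
    (hz : ∀ v ≠ z, edgeDegree C v = edgeDegree D v ∨ edgeDegree A v = edgeDegree B v) :
    IsNearlyBalanced (A + C) (B + D) ∨ IsNearlyBalanced (A + D) (B + C) := by
  by_cases hopp : edgeDegree A z ≤ edgeDegree B z ∧ edgeDegree D z ≤ edgeDegree C z ∨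
      edgeDegree B z ≤ edgeDegree A z ∧ edgeDegree C z ≤ edgeDegree D z
  · exact Or.inl (hAB.add hCD hz hopp)
  · refine Or.inr (hAB.add hCD.symm (fun v hv => (hz v hv).imp_left Eq.symm) (by omega))

lemma isNearlyBalanced_alternatingSplit {a : V} {t : List V} (h : (a :: t).IsChain (· ≠ ·)) :
    IsNearlyBalanced (alternatingSplit (a :: t)).1 (alternatingSplit (a :: t)).2 ∧
      ∀ v ≠ a, v ≠ (a :: t).getLast (List.cons_ne_nil a t) →
        edgeDegree (alternatingSplit (a :: t)).1 v =
          edgeDegree (alternatingSplit (a :: t)).2 v := by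
  obtain ⟨ε, hε, himb⟩ := imbalance_alternatingSplit h
  refine ⟨fun v => ?_, fun v hva hvl => ?_⟩
  · have := himb v
    split_ifs at this <;> omega
  · have := himb v
    rw [if_neg hva, if_neg hvl] at this
    omega

lemma exists_closed_or_pendant_walk [Fintype V] {E : Multiset (Sym2 V)}
    (hE : ∀ e ∈ E, ¬ e.IsDiag) (h0 : E ≠ 0) :
    ∃ a b t, (a :: b :: t).IsChain (· ≠ ·) ∧ walkEdges (a :: b :: t) ≤ E ∧
      (a = (a :: b :: t).getLast (List.cons_ne_nil a _) ∨
        edgeDegree (E - walkEdges (a :: b :: t)) a = 0) := by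
  obtain ⟨e, he⟩ := Multiset.exists_mem_of_ne_zero h0
  obtain ⟨w, u, t, hnd, hle, hmax⟩ := exists_maximal_path he (hE e he)
  have hw := edgeDegree_walkEdges_head hnd
  by_cases hleaf : edgeDegree E w ≤ 1
  · exact ⟨w, u, t, hnd.isChain, hle, Or.inr (by rw [edgeDegree_sub hle]; omega)⟩
  obtain ⟨f, hf, hwf⟩ : ∃ f ∈ E - walkEdges (w :: u :: t), w ∈ f :=
    Multiset.countP_pos.mp (by rw [← edgeDegree, edgeDegree_sub hle]; omega)
  obtain ⟨y, rfl⟩ := Sym2.mem_iff_exists.mp hwf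
  have hyw : y ≠ w := fun h => hE _ (Multiset.mem_of_le tsub_le_self hf) (by simp [h])
  have hy : y ∈ w :: u :: t := by
    by_contra hy
    exact hmax y hy (by rw [Sym2.eq_swap]; exact cons_le_of_mem_tsub hle hf)
  obtain ⟨_ | ⟨x, l₁⟩, l₂, hsplit⟩ := List.append_of_mem hy
  · exact absurd (List.cons_eq_cons.mp hsplit).1 hyw.symm
  obtain ⟨rfl, hsplit⟩ := List.cons_eq_cons.mp hsplit
  have hprefix : walkEdges (w :: l₁ ++ [y]) ≤ walkEdges (w :: u :: t) := by
    simpa [hsplit] using walkEdges_le_append (w :: l₁ ++ [y]) l₂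
  refine ⟨y, w, l₁ ++ [y], ?_, ?_, Or.inl (by simp)⟩
  · have hnd' : (w :: l₁ ++ [y]).Nodup := hnd.sublist (by simp [hsplit])
    exact List.isChain_cons_cons.mpr ⟨hyw, hnd'.isChain⟩
  · change s(y, w) ::ₘ walkEdges (w :: l₁ ++ [y]) ≤ E
    rw [Sym2.eq_swap]
    exact cons_le_of_mem_tsub (hprefix.trans hle)
      (Multiset.mem_of_le (tsub_le_tsub_left hprefix E) hf)

theorem exists_isNearlyBalanced_split [Fintype V] (E : Multiset (Sym2 V))
    (hE : ∀ e ∈ E, ¬ e.IsDiag) :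
    ∃ A B, A + B = E ∧ IsNearlyBalanced A B := by
  induction hcard : E.card using Nat.strong_induction_on generalizing E with
  | _ n ih =>
  rcases eq_or_ne E 0 with rfl | h0
  · exact ⟨0, 0, rfl, fun v => by simp⟩
  obtain ⟨a, b, t, hchain, hle, hend⟩ := exists_closed_or_pendant_walk hE h0
  set F := walkEdges (a :: b :: t)
  have hcard_lt : (E - F).card < n := by
    have := Multiset.card_pos.mpr h0
    rw [← hcard, Multiset.card_sub hle]
    simp only [F, walkEdges, Multiset.card_cons]
    omega
  obtain ⟨A, B, hAB, hbal⟩ := ih _ hcard_lt (E - F)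
    (fun e he => hE e (Multiset.mem_of_le tsub_le_self he)) rfl
  obtain ⟨hCD, hCDeq⟩ := isNearlyBalanced_alternatingSplit hchain
  set C := (alternatingSplit (a :: b :: t)).1
  set D := (alternatingSplit (a :: b :: t)).2
  have hsum : A + B + (C + D) = E := by
    rw [hAB, alternatingSplit_fst_add_snd, tsub_add_cancel_of_le hle]
  have hz : ∀ v ≠ (a :: b :: t).getLast (List.cons_ne_nil a _),
      edgeDegree C v = edgeDegree D v ∨ edgeDegree A v = edgeDegree B v := by
    intro v hv
    rcases eq_or_ne v a with rfl | hva
    · refine Or.inr ?_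
      have := edgeDegree_add A B v
      rw [hAB, hend.resolve_left hv] at this
      omega
    · exact Or.inl (hCDeq v hva hv)
  rcases hbal.add_or_add hCD hz with h | h
  · exact ⟨A + C, B + D, by rw [← hsum]; abel, h⟩
  · exact ⟨A + D, B + C, by rw [← hsum]; abel, h⟩

lemma card_filter_mem_le_edgeDegree (s : Finset V) (u : V) (M : Multiset (Sym2 V)) :
    #{v ∈ s | s(u, v) ∈ M} ≤ edgeDegree M u := by
  calc #{v ∈ s | s(u, v) ∈ M}
      ≤ (M.filter (u ∈ ·)).toFinset.card :=
        card_le_card_of_injOn (fun v => s(u, v)) (fun v hv => by simp_all)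
          (fun v _ w _ h => Sym2.congr_right.mp h)
    _ ≤ edgeDegree M u := by
        rw [edgeDegree, Multiset.countP_eq_card_filter]
        exact Multiset.toFinset_card_le _

end Split

section Coloring

variable {V : Type*} [Fintype V]

def colorDegree (G : SimpleGraph V) [DecidableRel G.Adj] {k : ℕ} (c : Sym2 V → Fin k) (u : V)
    (α : Fin k) : ℕ :=
  #{v ∈ G.neighborFinset u | c s(u, v) = α}

lemma not_isDiag_of_mem_edgeFinset_val (G : SimpleGraph V) [DecidableRel G.Adj] :
    ∀ e ∈ G.edgeFinset.val, ¬ e.IsDiag :=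
  fun _ he => G.not_isDiag_of_mem_edgeSet (mem_edgeFinset.mp he)

variable [DecidableEq V]

lemma edgeDegree_edgeFinset (G : SimpleGraph V) [DecidableRel G.Adj] (u : V) :
    edgeDegree G.edgeFinset.val u = G.degree u := by
  rw [edgeDegree, Multiset.countP_eq_card_filter, ← Finset.filter_val, Finset.card_val,
    ← incidenceFinset_eq_filter, card_incidenceFinset_eq_degree]

lemma exists_coloring_colorDegree_le {k : ℕ} [NeZero k] (G : SimpleGraph V) [DecidableRel G.Adj]
    (P : Fin k → Multiset (Sym2 V)) (hP : ∀ e ∈ G.edgeSet, ∃ i, e ∈ P i) :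
    ∃ c : Sym2 V → Fin k, ∀ u α, colorDegree G c u α ≤ edgeDegree (P α) u := by
  classical
  let c : Sym2 V → Fin k := fun e => if h : ∃ i, e ∈ P i then h.choose else 0
  have hc : ∀ e ∈ G.edgeSet, e ∈ P (c e) := fun e he => by
    simp only [c, dif_pos (hP e he)]
    exact (hP e he).choose_spec
  refine ⟨c, fun u α => (card_le_card fun v hv => ?_).trans
    (card_filter_mem_le_edgeDegree (G.neighborFinset u) u (P α))⟩
  simp only [mem_filter, mem_neighborFinset] at hv ⊢
  exact ⟨hv.1, hv.2 ▸ hc _ hv.1⟩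

theorem exists_two_coloring_colorDegree_le (G : SimpleGraph V) [DecidableRel G.Adj] :
    ∃ c : Sym2 V → Fin 2, ∀ u α, 2 * colorDegree G c u α ≤ G.degree u + 2 := by
  obtain ⟨A, B, hAB, hbal⟩ :=
    exists_isNearlyBalanced_split _ (not_isDiag_of_mem_edgeFinset_val G)
  obtain ⟨c, hc⟩ := exists_coloring_colorDegree_le G ![A, B] fun e he => by
    have : e ∈ A + B := hAB ▸ mem_edgeFinset.mpr he
    simpa [Fin.exists_fin_two] using this
  refine ⟨c, fun u α => (Nat.mul_le_mul_left 2 (hc u α)).trans ?_⟩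
  have hdeg := edgeDegree_edgeFinset G u
  rw [← hAB, edgeDegree_add] at hdeg
  have := hbal u
  fin_cases α <;> simp <;> omega

theorem exists_majority_four_coloring (G : SimpleGraph V) [DecidableRel G.Adj]
    (hδ : ∀ v, 4 ≤ G.degree v) : ∃ c : Sym2 V → Fin 4, IsMajorityEdgeColoring G c := by
  have hloop := not_isDiag_of_mem_edgeFinset_val G
  obtain ⟨F₁, F₂, hF, hFbal⟩ := exists_isNearlyBalanced_split _ hloop
  obtain ⟨A₁, A₂, hA, hAbal⟩ := exists_isNearlyBalanced_split F₁ fun e he =>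
    hloop e (Multiset.mem_of_le (hF ▸ Multiset.le_add_right F₁ F₂) he)
  obtain ⟨B₁, B₂, hB, hBbal⟩ := exists_isNearlyBalanced_split F₂ fun e he =>
    hloop e (Multiset.mem_of_le (hF ▸ Multiset.le_add_left F₂ F₁) he)
  obtain ⟨c, hc⟩ := exists_coloring_colorDegree_le G ![A₁, A₂, B₁, B₂] fun e he => by
    have : e ∈ A₁ + A₂ + (B₁ + B₂) := hA ▸ hB ▸ hF ▸ mem_edgeFinset.mpr he
    simpa [Fin.exists_fin_succ, or_assoc] using this
  refine ⟨c, fun u α => (Nat.mul_le_mul_left 2 (hc u α)).trans ?_⟩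
  have hdeg := edgeDegree_edgeFinset G u
  rw [← hF, ← hA, ← hB] at hdeg
  simp only [edgeDegree_add] at hdeg
  have := hFbal u
  rw [← hA, ← hB] at this
  simp only [edgeDegree_add] at this
  have := hAbal u
  have := hBbal u
  have := hδ u
  fin_cases α <;> simp <;> omega

end Coloring

section Sum

variable {V : Type*} {m n : ℕ}

open Classical in
noncomputable def sumColoring (H : SimpleGraph V) (c₁ : Sym2 V → Fin m) (c₂ : Sym2 V → Fin n)
    (e : Sym2 V) : Fin (m + n) :=
  if e ∈ H.edgeSet then Fin.castAdd n (c₁ e) else Fin.natAdd m (c₂ e)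

lemma sumColoring_lt_iff (H : SimpleGraph V) (c₁ : Sym2 V → Fin m) (c₂ : Sym2 V → Fin n)
    (e : Sym2 V) : (sumColoring H c₁ c₂ e : ℕ) < m ↔ e ∈ H.edgeSet := by
  unfold sumColoring
  split_ifs with h <;> simp [h]

lemma isDistinguishingEdgeColoring_sumColoring {G H : SimpleGraph V} (hHG : H ≤ G)
    (hH : ∀ φ : H ≃g H, ∀ x, φ x = x) (c₁ : Sym2 V → Fin m) (c₂ : Sym2 V → Fin n) :
    IsDistinguishingEdgeColoring G (sumColoring H c₁ c₂) := by
  intro φ hφ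
  have hH_iff : ∀ u v, G.Adj u v → (H.Adj (φ u) (φ v) ↔ H.Adj u v) := fun u v huv => by
    rw [← mem_edgeSet, ← mem_edgeSet, ← sumColoring_lt_iff H c₁ c₂, ← sumColoring_lt_iff H c₁ c₂,
      hφ u v huv]
  exact hH ⟨φ.toEquiv, fun {u v} => ⟨fun h => (hH_iff u v (φ.map_adj_iff.mp (hHG h))).mp h,
    fun h => (hH_iff u v (hHG h)).mpr h⟩⟩

variable [Fintype V] {G H : SimpleGraph V} [DecidableRel G.Adj] [DecidableRel H.Adj]

lemma colorDegree_sumColoring_castAdd (hHG : H ≤ G) (c₁ : Sym2 V → Fin m) (c₂ : Sym2 V → Fin n)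
    (u : V) (i : Fin m) :
    colorDegree G (sumColoring H c₁ c₂) u (Fin.castAdd n i) = colorDegree H c₁ u i := by
  unfold colorDegree
  congr 1
  ext v
  simp only [mem_filter, mem_neighborFinset, sumColoring, mem_edgeSet]
  split_ifs with h
  · simp [h, hHG h]
  · simp [h, Fin.ext_iff]
    omega

lemma colorDegree_sumColoring_natAdd (c₁ : Sym2 V → Fin m) (c₂ : Sym2 V → Fin n)
    (u : V) (j : Fin n) :
    colorDegree G (sumColoring H c₁ c₂) u (Fin.natAdd m j) = colorDegree (G \ H) c₂ u j := by
  unfold colorDegree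
  congr 1
  ext v
  simp only [mem_filter, mem_neighborFinset, sumColoring, mem_edgeSet, sdiff_adj]
  split_ifs with h
  · simp [h, Fin.ext_iff]
    omega
  · simp [h]

lemma degree_sdiff_add_degree (hHG : H ≤ G) (u : V) :
    (G \ H).degree u + H.degree u = G.degree u := by
  simp only [← card_neighborFinset_eq_degree]
  rw [← card_filter_add_card_filter_not (s := G.neighborFinset u) (fun v => ¬ H.Adj u v)]
  congr 2 <;> ext v <;> simp [and_iff_right_of_imp (@hHG u v)]

lemma isMajorityEdgeColoring_sumColoring [DecidableEq V] (hHG : H ≤ G) {c₁ : Sym2 V → Fin m}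
    {c₂ : Sym2 V → Fin n} (h₁ : ∀ u i, 2 * colorDegree H c₁ u i ≤ G.degree u)
    (h₂ : ∀ u j, 2 * colorDegree (G \ H) c₂ u j ≤ G.degree u) :
    IsMajorityEdgeColoring G (sumColoring H c₁ c₂) := by
  intro u α
  change 2 * colorDegree G _ u α ≤ _
  induction α using Fin.addCases with
  | left i => rw [colorDegree_sumColoring_castAdd hHG]; exact h₁ u i
  | right j => rw [colorDegree_sumColoring_natAdd]; exact h₂ u j

end Sum

theorem majority_distinguishing_six_colors_general {V : Type*} [Fintype V] [DecidableEq V]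
    (G : SimpleGraph V) [DecidableRel G.Adj]
    (hH : ∃ H : SimpleGraph V, H ≤ G ∧ H.Connected ∧
      (∀ v : V, 4 ≤ (H.neighborSet v).ncard) ∧ ∀ φ : H ≃g H, ∀ x : V, φ x = x) :
    ∃ c : Sym2 V → Fin 6,
      IsMajorityEdgeColoring G c ∧ IsDistinguishingEdgeColoring G c := by
  classical
  obtain ⟨H, hHG, -, hHδ, hHasym⟩ := hH
  have hHdeg : ∀ v, 4 ≤ H.degree v := fun v => by
    rw [← card_neighborSet_eq_degree, ← Nat.card_eq_fintype_card, Nat.card_coe_set_eq]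
    exact hHδ v
  obtain ⟨c₁, hc₁⟩ := exists_majority_four_coloring H hHdeg
  obtain ⟨c₂, hc₂⟩ := exists_two_coloring_colorDegree_le (G \ H)
  refine ⟨sumColoring H c₁ c₂, isMajorityEdgeColoring_sumColoring hHG (fun u i => ?_)
    (fun u j => ?_), isDistinguishingEdgeColoring_sumColoring hHG hHasym c₁ c₂⟩
  · exact (hc₁ u i).trans (degree_le_of_le hHG)
  · have := hc₂ u j
    have := degree_sdiff_add_degree hHG u
    have := hHdeg u
    omega

/-- Every graph of minimum degree at least 4 which has a connected asymmetric spanning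
subgraph of minimum degree at least 4 has a majority distinguishing edge 6-coloring. -/
theorem majority_distinguishing_six_colors {V : Type*} [Fintype V] [DecidableEq V]
    (G : SimpleGraph V) [DecidableRel G.Adj]
    (hδ : ∀ v : V, 4 ≤ G.degree v)
    (hH : ∃ H : SimpleGraph V, H ≤ G ∧ H.Connected ∧
      (∀ v : V, 4 ≤ (H.neighborSet v).ncard) ∧ ∀ φ : H ≃g H, ∀ x : V, φ x = x) :
    ∃ c : Sym2 V → Fin 6,
      IsMajorityEdgeColoring G c ∧ IsDistinguishingEdgeColoring G c :=
  majority_distinguishing_six_colors_general G hH
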